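/- arXiv:2409.20520 — 9 statements merged into one kernel-verified Lean document; each statement's English description precedes it below -/
import Mathlib

section
/- Let b_1,…,b_n be axis-aligned bounding boxes with confidence scores s_1,…,s_n ∈ ℝ and let N_t ∈ ℝ. Define E(v,u) ⇔ s_v > s_u and IOU(b_v,b_u) > N_t. Then there exists exactly one function k : {1,…,n} → {0,1} satisfying, for every u, k(u) = 1 if and only if k(v) = 0 for every v with E(v,u). (Consequently, the output of original greedy NMS, which satisfies this recursion, coincides with the dynamic-programming values δ computed along any topological order of the arcs E.) -/
/-- An axis-aligned bounding box, given by its left-top and right-bottom corners. -/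
structure Box where
  xlt : ℝ
  ylt : ℝ
  xrb : ℝ
  yrb : ℝ
  hx : xlt ≤ xrb
  hy : ylt ≤ yrb

/-- The area of a box. -/
noncomputable def Box.area (b : Box) : ℝ := (b.xrb - b.xlt) * (b.yrb - b.ylt)

/-- The area of the intersection of two boxes. -/
noncomputable def Box.inter (b b' : Box) : ℝ :=
  max 0 (min b.xrb b'.xrb - max b.xlt b'.xlt) * max 0 (min b.yrb b'.yrb - max b.ylt b'.ylt)

/-- The intersection over union of two boxes. -/
noncomputable def Box.iou (b b' : Box) : ℝ :=
  Box.inter b b' / (b.area + b'.area - Box.inter b b')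

/-- The x-coordinate of the centroid of a box. -/
noncomputable def Box.xc (b : Box) : ℝ := (b.xlt + b.xrb) / 2

/-- The y-coordinate of the centroid of a box. -/
noncomputable def Box.yc (b : Box) : ℝ := (b.ylt + b.yrb) / 2

/-- There is exactly one function `k : {1,…,n} → {0,1}` satisfying the NMS fixed-point
recursion `k(u) = 1 ↔ (∀ v, E(v,u) → k(v) = 0)`. -/
theorem nms_fixed_point_unique (n : ℕ) (b : Fin n → Box) (s : Fin n → ℝ) (Nt : ℝ)
    (E : Fin n → Fin n → Prop)
    (hE : ∀ v u, E v u ↔ s v > s u ∧ Box.iou (b v) (b u) > Nt) :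
    ∃! k : Fin n → Fin 2, ∀ u, k u = 1 ↔ ∀ v, E v u → k v = 0 := by
  classical
  have htrans : IsTrans (Fin n) (fun v u => s v > s u) := ⟨fun a b c h1 h2 => lt_trans h2 h1⟩
  have hirr : IsIrrefl (Fin n) (fun v u => s v > s u) := ⟨fun a => lt_irrefl _⟩
  have hwf : WellFounded (fun v u : Fin n => s v > s u) :=
    Finite.wellFounded_of_trans_of_irrefl _
  -- key: any two solutions agree
  have huniq : ∀ k1 k2 : Fin n → Fin 2,
      (∀ u, k1 u = 1 ↔ ∀ v, E v u → k1 v = 0) →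
      (∀ u, k2 u = 1 ↔ ∀ v, E v u → k2 v = 0) → k1 = k2 := by
    intro k1 k2 h1 h2
    funext u
    induction u using hwf.induction with
    | _ u ih =>
      have hiff : (∀ v, E v u → k1 v = 0) ↔ (∀ v, E v u → k2 v = 0) := by
        constructor <;> intro h v hv <;>
          have := ih v ((hE v u).mp hv).1
        · rw [← this]; exact h v hv
        · rw [this]; exact h v hv
      have h12 : k1 u = 1 ↔ k2 u = 1 := (h1 u).trans (hiff.trans (h2 u).symm)
      have hc : ∀ a : Fin 2, a = 0 ∨ a = 1 := by decide
      rcases hc (k1 u) with ha | ha <;> rcases hc (k2 u) with hb | hb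
      · rw [ha, hb]
      · exact absurd (h12.mpr hb) (by rw [ha]; decide)
      · exact absurd (h12.mp ha) (by rw [hb]; decide)
      · rw [ha, hb]
  -- existence via well-founded recursion
  let F : ∀ u : Fin n, (∀ v : Fin n, s v > s u → Fin 2) → Fin 2 :=
    fun u ih => if ∀ v, ∀ h : E v u, ih v ((hE v u).mp h).1 = 0 then 1 else 0
  let k : Fin n → Fin 2 := hwf.fix F
  have hk : ∀ u, k u = F u (fun v _ => k v) := fun u => hwf.fix_eq F u
  have hkP : ∀ u, k u = 1 ↔ ∀ v, E v u → k v = 0 := by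
    intro u
    rw [hk u]
    show (if ∀ v, ∀ _ : E v u, k v = 0 then (1 : Fin 2) else 0) = 1 ↔ _
    by_cases h : ∀ v, E v u → k v = 0
    · simp [h]
    · simp only [if_neg h]
      constructor
      · intro h0; exact absurd h0 (by decide)
      · intro h0; exact absurd h0 h
  exact ⟨k, hkP, fun k' hk' => huniq k' k hk' hkP⟩
end

section
/- Let b_1,…,b_n be axis-aligned bounding boxes with confidence scores s_1,…,s_n ∈ ℝ, N_t ∈ ℝ, and E(v,u) ⇔ s_v > s_u and IOU(b_v,b_u) > N_t. Let W ⊆ {1,…,n} be closed under adjacency, i.e., for all u ∈ W and all v ∈ {1,…,n}, if E(u,v) or E(v,u) then v ∈ W. Suppose k : {1,…,n} → {0,1} satisfies k(u) = 1 ⇔ (∀v, E(v,u) → k(v) = 0) for all u, and k' : W → {0,1} satisfies k'(u) = 1 ⇔ (∀v ∈ W, E(v,u) → k'(v) = 0) for all u ∈ W. Then k(u) = k'(u) for all u ∈ W. In particular, the NMS result on a weakly connected component of the graph (V,E) is independent of all other weakly connected components. -/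
/-- The NMS result on a set of nodes closed under adjacency (a union of weakly connected
components) is independent of all other nodes. -/
theorem nms_wcc_independent (n : ℕ) (b : Fin n → Box) (s : Fin n → ℝ) (Nt : ℝ)
    (E : Fin n → Fin n → Prop)
    (hE : ∀ v u, E v u ↔ s v > s u ∧ Box.iou (b v) (b u) > Nt)
    (W : Set (Fin n))
    (hW : ∀ u ∈ W, ∀ v, (E u v ∨ E v u) → v ∈ W)
    (k : Fin n → Fin 2)
    (hk : ∀ u, k u = 1 ↔ ∀ v, E v u → k v = 0)
    (k' : W → Fin 2)
    (hk' : ∀ u : W, k' u = 1 ↔ ∀ v : W, E v.1 u.1 → k' v = 0) :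
    ∀ u : W, k u.1 = k' u := by
  classical
  -- measure: number of nodes with strictly higher score
  set m : Fin n → ℕ := fun u => (Finset.univ.filter (fun v => s u < s v)).card with hm
  have hmE : ∀ v u, E v u → m v < m u := by
    intro v u hvu
    have hs : s u < s v := ((hE v u).1 hvu).1
    apply Finset.card_lt_card
    constructor
    · intro x hx
      simp only [Finset.mem_filter, Finset.mem_univ, true_and] at hx ⊢
      exact lt_trans hs hx
    · intro hsub
      have : v ∈ Finset.univ.filter (fun x => s u < s x) := by
        simp [hs]
      have := hsub this
      simp at this
  have main : ∀ N : ℕ, ∀ u : W, m u.1 ≤ N → k u.1 = k' u := by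
    intro N
    induction N with
    | zero =>
      intro u hu
      have h1 : k u.1 = 1 := by
        rw [hk]
        intro v hv
        exact absurd (hmE v u.1 hv) (by omega)
      have h2 : k' u = 1 := by
        rw [hk']
        intro v hv
        exact absurd (hmE v.1 u.1 hv) (by omega)
      rw [h1, h2]
    | succ N ih =>
      intro u hu
      have key : k u.1 = 1 ↔ k' u = 1 := by
        rw [hk, hk']
        constructor
        · intro h v hv
          have hv' := h v.1 hv
          have hmv : m v.1 ≤ N := by have := hmE v.1 u.1 hv; omega
          rw [← ih v hmv]; exact hv'
        · intro h v hv
          have hvW : v ∈ W := hW u.1 u.2 v (Or.inr hv)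
          have hmv : m v ≤ N := by have := hmE v u.1 hv; omega
          rw [ih ⟨v, hvW⟩ hmv]; exact h ⟨v, hvW⟩ hv
      have : ∀ x : Fin 2, x = 0 ∨ x = 1 := by decide
      rcases this (k u.1) with h | h <;> rcases this (k' u) with h' | h'
      · rw [h, h']
      · have := key.2 h'; rw [h] at this; exact absurd this (by decide)
      · have := key.1 h; rw [h'] at this; exact absurd this (by decide)
      · rw [h, h']
  intro u
  exact main (m u.1) u le_rfl
end

section
/- Let (c_1, s_1), …, (c_n, s_n) be pairs of real numbers with c_1 < c_2 < … < c_n (keys strictly increasing) and with the s_i pairwise distinct. Define the QSI-tree QT(I) of a finite index set I ⊆ {1,…,n} recursively: QT(∅) is the empty tree; otherwise its root is the index m ∈ I maximizing s_m, its left subtree is QT({i ∈ I : c_i ≤ c_m} \ {m}), and its right subtree is QT({i ∈ I : c_i > c_m}). Define the Cartesian tree CT(l,r) of a contiguous interval of indices recursively: CT(l,r) is empty if l > r; otherwise its root is the index m ∈ {l,…,r} maximizing s_m, its left subtree is CT(l, m−1), and its right subtree is CT(m+1, r). Then QT({1,…,n}) = CT(1,n); that is, the QSI-tree is the Cartesian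 tree for the sequence sorted in ascending order of centroids, in which each key is the confidence score of the corresponding box. -/
/-- A binary tree whose nodes are labeled by (integer) indices. -/
inductive BTree : Type where
  | nil : BTree
  | node (root : ℤ) (l r : BTree) : BTree

/-- The index in `I` maximizing the score `s` (the smallest such index if several attain
the maximum; it is unique when `s` is injective on `I`). -/
noncomputable def argmaxScore (s : ℤ → ℝ) (I : Finset ℤ) : ℤ :=
  if h : I.Nonempty then
    (I.filter fun i => ∀ j ∈ I, s j ≤ s i).min' (by
      obtain ⟨m, hm, hmax⟩ := I.exists_max_image s h
      exact ⟨m, Finset.mem_filter.mpr ⟨hm, hmax⟩⟩)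
  else 0

lemma argmaxScore_mem (s : ℤ → ℝ) (I : Finset ℤ) (h : I.Nonempty) :
    argmaxScore s I ∈ I := by
  rw [argmaxScore, dif_pos h]
  exact Finset.mem_of_mem_filter _ (Finset.min'_mem _ _)

/-- The QSI-tree of a finite index set `I`: its root is the index `m ∈ I` maximizing `s`,
its left subtree is the QSI-tree of `{i ∈ I : c i ≤ c m} \ {m}`, and its right subtree is
the QSI-tree of `{i ∈ I : c i > c m}`. -/
noncomputable def QT (c s : ℤ → ℝ) (I : Finset ℤ) : BTree :=
  if h : I.Nonempty then
    BTree.node (argmaxScore s I)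
      (QT c s ((I.filter fun i => c i ≤ c (argmaxScore s I)).erase (argmaxScore s I)))
      (QT c s (I.filter fun i => c (argmaxScore s I) < c i))
  else .nil
termination_by I.card
decreasing_by
  · have hmem : argmaxScore s I ∈ I.filter fun i => c i ≤ c (argmaxScore s I) :=
      Finset.mem_filter.mpr ⟨argmaxScore_mem s I h, le_refl _⟩
    exact lt_of_lt_of_le (Finset.card_erase_lt_of_mem hmem) (Finset.card_filter_le _ _)
  · refine Finset.card_lt_card ?_
    refine (Finset.ssubset_iff_of_subset (Finset.filter_subset _ _)).mpr ?_
    exact ⟨argmaxScore s I, argmaxScore_mem s I h, by simp⟩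

/-- The Cartesian tree of the contiguous interval of indices `{l, …, r}`: empty if `l > r`;
otherwise its root is the index `m ∈ {l, …, r}` maximizing `s`, its left subtree is the
Cartesian tree of `{l, …, m − 1}`, and its right subtree is the Cartesian tree of
`{m + 1, …, r}`. -/
noncomputable def CT (s : ℤ → ℝ) (l r : ℤ) : BTree :=
  if h : l ≤ r then
    BTree.node (argmaxScore s (Finset.Icc l r))
      (CT s l (argmaxScore s (Finset.Icc l r) - 1))
      (CT s (argmaxScore s (Finset.Icc l r) + 1) r)
  else .nil
termination_by (r + 1 - l).toNat
decreasing_by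
  all_goals
    have hm : argmaxScore s (Finset.Icc l r) ∈ Finset.Icc l r :=
      argmaxScore_mem s _ ((Finset.nonempty_Icc).mpr h)
    rw [Finset.mem_Icc] at hm
    omega

lemma QT_Icc_eq_CT (c s : ℤ → ℝ) : ∀ l r : ℤ,
    (∀ i ∈ Finset.Icc l r, ∀ j ∈ Finset.Icc l r, i < j → c i < c j) →
    QT c s (Finset.Icc l r) = CT s l r := by
  suffices H : ∀ k : ℕ, ∀ l r : ℤ, (r + 1 - l).toNat = k →
      (∀ i ∈ Finset.Icc l r, ∀ j ∈ Finset.Icc l r, i < j → c i < c j) →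
      QT c s (Finset.Icc l r) = CT s l r from fun l r => H _ l r rfl
  intro k
  induction k using Nat.strong_induction_on with
  | _ k IH =>
  intro l r hk hc
  by_cases h : l ≤ r
  · have hne : (Finset.Icc l r).Nonempty := Finset.nonempty_Icc.mpr h
    set m := argmaxScore s (Finset.Icc l r) with hmdef
    have hm : m ∈ Finset.Icc l r := argmaxScore_mem s _ hne
    have hmax : ∀ j ∈ Finset.Icc l r, s j ≤ s m := by
      have : m ∈ (Finset.Icc l r).filter fun i => ∀ j ∈ Finset.Icc l r, s j ≤ s i := by
        rw [hmdef, argmaxScore, dif_pos hne]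
        exact Finset.min'_mem _ _
      exact (Finset.mem_filter.mp this).2
    rw [Finset.mem_Icc] at hm
    have hleft : (Finset.Icc l r).filter (fun i => c i ≤ c m) = Finset.Icc l m := by
      ext i
      simp only [Finset.mem_filter, Finset.mem_Icc]
      constructor
      · rintro ⟨⟨h1, h2⟩, h3⟩
        refine ⟨h1, ?_⟩
        by_contra hmi
        push_neg at hmi
        exact absurd h3 (not_le.mpr (hc m (Finset.mem_Icc.mpr ⟨hm.1, hm.2⟩) i
          (Finset.mem_Icc.mpr ⟨h1, h2⟩) hmi))
      · rintro ⟨h1, h2⟩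
        refine ⟨⟨h1, le_trans h2 hm.2⟩, ?_⟩
        rcases lt_or_eq_of_le h2 with h2 | h2
        · exact le_of_lt (hc i (Finset.mem_Icc.mpr ⟨h1, by omega⟩)
            m (Finset.mem_Icc.mpr ⟨hm.1, hm.2⟩) h2)
        · rw [h2]
    have hleft' : ((Finset.Icc l r).filter (fun i => c i ≤ c m)).erase m
        = Finset.Icc l (m - 1) := by
      rw [hleft]; ext i
      simp only [Finset.mem_erase, Finset.mem_Icc]
      omega
    have hright : (Finset.Icc l r).filter (fun i => c m < c i) = Finset.Icc (m + 1) r := by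
      ext i
      simp only [Finset.mem_filter, Finset.mem_Icc]
      constructor
      · rintro ⟨⟨h1, h2⟩, h3⟩
        refine ⟨?_, h2⟩
        by_contra hmi
        push_neg at hmi
        rcases lt_or_eq_of_le (by omega : i ≤ m) with him | him
        · exact absurd h3 (not_lt.mpr (le_of_lt (hc i (Finset.mem_Icc.mpr ⟨h1, h2⟩)
            m (Finset.mem_Icc.mpr ⟨hm.1, hm.2⟩) him)))
        · rw [him] at h3; exact lt_irrefl _ h3
      · rintro ⟨h1, h2⟩
        exact ⟨⟨by omega, h2⟩, hc m (Finset.mem_Icc.mpr ⟨hm.1, hm.2⟩)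
          i (Finset.mem_Icc.mpr ⟨by omega, h2⟩) (by omega)⟩
    have hsub1 : ∀ i ∈ Finset.Icc l (m - 1), i ∈ Finset.Icc l r := by
      intro i hi; rw [Finset.mem_Icc] at *; omega
    have hsub2 : ∀ i ∈ Finset.Icc (m + 1) r, i ∈ Finset.Icc l r := by
      intro i hi; rw [Finset.mem_Icc] at *; omega
    rw [QT, dif_pos hne, CT, dif_pos h, ← hmdef, hleft', hright]
    congr 1
    · exact IH ((m - 1) + 1 - l).toNat (by omega) l (m - 1) rfl
        (fun i hi j hj => hc i (hsub1 i hi) j (hsub1 j hj))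
    · exact IH (r + 1 - (m + 1)).toNat (by omega) (m + 1) r rfl
        (fun i hi j hj => hc i (hsub2 i hi) j (hsub2 j hj))
  · have : ¬ (Finset.Icc l r).Nonempty := by
      rw [Finset.nonempty_Icc]; exact h
    rw [QT, dif_neg this, CT, dif_neg h]

/-- If the keys `c 1 < c 2 < ⋯ < c n` are strictly increasing and the scores `s` are pairwise
distinct on `{1, …, n}`, then the QSI-tree of `{1, …, n}` is the Cartesian tree of the
interval `{1, …, n}` (the sequence sorted in ascending order of centroids, each key being
the confidence score of the corresponding box). -/
theorem QT_eq_CT (n : ℕ) (c s : ℤ → ℝ)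
    (hc : ∀ i ∈ Finset.Icc (1 : ℤ) n, ∀ j ∈ Finset.Icc (1 : ℤ) n, i < j → c i < c j)
    (hs : ∀ i ∈ Finset.Icc (1 : ℤ) n, ∀ j ∈ Finset.Icc (1 : ℤ) n, i ≠ j → s i ≠ s j) :
    QT c s (Finset.Icc 1 n) = CT s 1 n := by
  exact QT_Icc_eq_CT c s 1 n hc
end

section
/- For every finite list L of pairwise distinct real numbers there exists exactly one binary tree with real labels such that (i) the inorder traversal of the tree equals L, and (ii) the tree satisfies the max-heap property, meaning the label of every node is strictly greater than every label occurring in its left and right subtrees. (This tree is the Cartesian tree for L.) -/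
/-- A binary tree with real labels. -/
inductive RTree : Type where
  | nil : RTree
  | node (x : ℝ) (l r : RTree) : RTree

/-- The inorder traversal of a binary tree with real labels. -/
def RTree.inorder : RTree → List ℝ
  | .nil => []
  | .node x l r => l.inorder ++ x :: r.inorder

/-- The max-heap property: the label of every node is strictly greater than every label
occurring in its left and right subtrees. -/
def RTree.IsMaxHeap : RTree → Prop
  | .nil => True
  | .node x l r =>
      (∀ y ∈ l.inorder, y < x) ∧ (∀ y ∈ r.inorder, y < x) ∧ l.IsMaxHeap ∧ r.IsMaxHeap

lemma RTree.exists_max (L : List ℝ) (h : L ≠ []) : ∃ m ∈ L, ∀ y ∈ L, y ≤ m := by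
  induction L with
  | nil => simp at h
  | cons a L ih =>
    cases L with
    | nil => exact ⟨a, by simp⟩
    | cons b M =>
      obtain ⟨m, hm, hmax⟩ := ih (by simp)
      rcases le_total a m with hle | hle
      · refine ⟨m, List.mem_cons_of_mem _ hm, ?_⟩
        intro y hy
        rcases List.mem_cons.1 hy with rfl | hy
        · exact hle
        · exact hmax y hy
      · refine ⟨a, List.mem_cons_self, ?_⟩
        intro y hy
        rcases List.mem_cons.1 hy with rfl | hy
        · exact le_rfl
        · exact (hmax y hy).trans hle

lemma RTree.split_unique {x : ℝ} : ∀ {A C B D : List ℝ},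
    x ∉ A → x ∉ C → A ++ x :: B = C ++ x :: D → A = C ∧ B = D := by
  intro A
  induction A with
  | nil =>
    intro C B D hA hC h
    cases C with
    | nil => simpa using h
    | cons c C' =>
      simp only [List.nil_append, List.cons_append, List.cons.injEq] at h
      exact absurd (by rw [h.1]; exact List.mem_cons_self : x ∈ c :: C') hC
  | cons a A' ih =>
    intro C B D hA hC h
    cases C with
    | nil =>
      simp only [List.cons_append, List.nil_append, List.cons.injEq] at h
      exact absurd (by rw [← h.1]; exact List.mem_cons_self : x ∈ a :: A') hA
    | cons c C' =>
      simp only [List.cons_append, List.cons.injEq] at h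
      obtain ⟨rfl, h2⟩ := h
      have := ih (fun hm => hA (List.mem_cons_of_mem _ hm))
        (fun hm => hC (List.mem_cons_of_mem _ hm)) h2
      exact ⟨by rw [this.1], this.2⟩

lemma RTree.inorder_nil_iff (t : RTree) : t.inorder = [] ↔ t = .nil := by
  cases t with
  | nil => simp [RTree.inorder]
  | node x l r => simp [RTree.inorder]

lemma RTree.exists_heap : ∀ n (L : List ℝ), L.length = n → L.Pairwise (· ≠ ·) →
    ∃ t : RTree, t.inorder = L ∧ t.IsMaxHeap := by
  intro n
  induction n using Nat.strong_induction_on with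
  | _ n ih =>
    intro L hlen hL
    rcases eq_or_ne L [] with rfl | hne
    · exact ⟨.nil, rfl, trivial⟩
    obtain ⟨m, hm, hmax⟩ := RTree.exists_max L hne
    obtain ⟨A, B, rfl⟩ := List.append_of_mem hm
    rw [List.pairwise_append] at hL
    obtain ⟨hA, hB', hcross⟩ := hL
    rw [List.pairwise_cons] at hB'
    obtain ⟨hmB, hB⟩ := hB'
    have hAlt : ∀ y ∈ A, y < m := fun y hy =>
      lt_of_le_of_ne (hmax y (by simp [hy])) (hcross y hy m (by simp))
    have hBlt : ∀ y ∈ B, y < m := fun y hy =>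
      lt_of_le_of_ne (hmax y (by simp [hy])) (fun h => hmB y hy h.symm)
    have hlenA : A.length < n := by
      subst hlen; simp only [List.length_append, List.length_cons]; omega
    have hlenB : B.length < n := by
      subst hlen; simp only [List.length_append, List.length_cons]; omega
    obtain ⟨tA, hA1, hA2⟩ := ih A.length hlenA A rfl hA
    obtain ⟨tB, hB1, hB2⟩ := ih B.length hlenB B rfl hB
    refine ⟨.node m tA tB, by simp [RTree.inorder, hA1, hB1], ?_⟩
    exact ⟨hA1 ▸ hAlt, hB1 ▸ hBlt, hA2, hB2⟩

lemma RTree.heap_unique : ∀ n (L : List ℝ), L.length = n → L.Pairwise (· ≠ ·) →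
    ∀ t1 t2 : RTree, t1.inorder = L → t1.IsMaxHeap → t2.inorder = L → t2.IsMaxHeap →
    t1 = t2 := by
  intro n
  induction n using Nat.strong_induction_on with
  | _ n ih =>
    intro L hlen hL t1 t2 h1 hh1 h2 hh2
    rcases eq_or_ne L [] with rfl | hne
    · rw [(RTree.inorder_nil_iff t1).1 h1, (RTree.inorder_nil_iff t2).1 h2]
    cases t1 with
    | nil => exact absurd h1.symm hne
    | node x1 l1 r1 =>
      cases t2 with
      | nil => exact absurd h2.symm hne
      | node x2 l2 r2 =>
        obtain ⟨hl1, hr1, hhl1, hhr1⟩ := hh1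
        obtain ⟨hl2, hr2, hhl2, hhr2⟩ := hh2
        -- roots are equal
        have hx1 : x1 ∈ L := h1 ▸ (by simp [RTree.inorder])
        have hx2 : x2 ∈ L := h2 ▸ (by simp [RTree.inorder])
        have hxeq : x1 = x2 := by
          by_contra hxy
          have hx1' : x1 ∈ (RTree.node x2 l2 r2).inorder := h2 ▸ hx1
          have hx2' : x2 ∈ (RTree.node x1 l1 r1).inorder := h1 ▸ hx2
          simp only [RTree.inorder, List.mem_append, List.mem_cons] at hx1' hx2'
          have h12 : x1 < x2 := by
            rcases hx1' with h | h | h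
            · exact hl2 x1 h
            · exact absurd h hxy
            · exact hr2 x1 h
          have h21 : x2 < x1 := by
            rcases hx2' with h | h | h
            · exact hl1 x2 h
            · exact absurd h.symm hxy
            · exact hr1 x2 h
          exact absurd (h12.trans h21) (lt_irrefl x1)
        subst hxeq
        have heq : l1.inorder ++ x1 :: r1.inorder = l2.inorder ++ x1 :: r2.inorder := by
          have := h1.trans h2.symm
          simpa [RTree.inorder] using this
        have hnotm1 : x1 ∉ l1.inorder := fun h => lt_irrefl x1 (hl1 x1 h)
        have hnotm2 : x1 ∉ l2.inorder := fun h => lt_irrefl x1 (hl2 x1 h)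
        obtain ⟨heql, heqr⟩ := RTree.split_unique hnotm1 hnotm2 heq
        -- pairwise of sublists
        have hL1 : (l1.inorder ++ x1 :: r1.inorder).Pairwise (· ≠ ·) := by
          rw [show l1.inorder ++ x1 :: r1.inorder = L from h1]; exact hL
        rw [List.pairwise_append] at hL1
        obtain ⟨hpl, hpr', -⟩ := hL1
        rw [List.pairwise_cons] at hpr'
        obtain ⟨-, hpr⟩ := hpr'
        have hlenl : l1.inorder.length < n := by
          subst hlen; rw [← h1]
          simp only [RTree.inorder, List.length_append, List.length_cons]; omega
        have hlenr : r1.inorder.length < n := by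
          subst hlen; rw [← h1]
          simp only [RTree.inorder, List.length_append, List.length_cons]; omega
        have el : l1 = l2 := ih l1.inorder.length hlenl l1.inorder rfl hpl l1 l2 rfl hhl1
          heql.symm hhl2
        have er : r1 = r2 := ih r1.inorder.length hlenr r1.inorder rfl hpr r1 r2 rfl hhr1
          heqr.symm hhr2
        rw [el, er]

/-- For every finite list of pairwise distinct real numbers there is exactly one binary tree
(the Cartesian tree) whose inorder traversal is the list and which satisfies the max-heap
property. -/
theorem cartesian_tree_existsUnique (L : List ℝ) (hL : L.Pairwise (· ≠ ·)) :
    ∃! t : RTree, t.inorder = L ∧ t.IsMaxHeap := by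
  obtain ⟨t, ht1, ht2⟩ := RTree.exists_heap L.length L rfl hL
  refine ⟨t, ⟨ht1, ht2⟩, ?_⟩
  rintro t' ⟨h1', h2'⟩
  exact RTree.heap_unique L.length L rfl hL t' t h1' h2' ht1 ht2
end

section
/- Let b* and b be axis-aligned bounding boxes with Area(b*) > 0 and Area(b) > 0. If the centroid of b does not lie within b*, i.e., if x_c(b) > x_rb(b*) or x_c(b) < x_lt(b*) or y_c(b) > y_rb(b*) or y_c(b) < y_lt(b*), then IOU(b*, b) ≤ 1/2. -/
/-- If the centroid of `b` does not lie within `b*`, then `IOU(b*, b) ≤ 1/2`. -/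
theorem iou_le_half_of_centroid_outside (bstar b : Box)
    (hstar : 0 < bstar.area) (hb : 0 < b.area)
    (hc : b.xc > bstar.xrb ∨ b.xc < bstar.xlt ∨ b.yc > bstar.yrb ∨ b.yc < bstar.ylt) :
    Box.iou bstar b ≤ 1 / 2 := by
  set W := max 0 (min bstar.xrb b.xrb - max bstar.xlt b.xlt) with hW
  set H := max 0 (min bstar.yrb b.yrb - max bstar.ylt b.ylt) with hH
  have hW0 : 0 ≤ W := le_max_left _ _
  have hH0 : 0 ≤ H := le_max_left _ _
  have hwb : 0 ≤ b.xrb - b.xlt := by linarith [b.hx]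
  have hhb : 0 ≤ b.yrb - b.ylt := by linarith [b.hy]
  have hws : 0 ≤ bstar.xrb - bstar.xlt := by linarith [bstar.hx]
  have hhs : 0 ≤ bstar.yrb - bstar.ylt := by linarith [bstar.hy]
  have hWb : W ≤ b.xrb - b.xlt := by
    apply max_le hwb
    have := min_le_right bstar.xrb b.xrb
    have := le_max_right bstar.xlt b.xlt
    linarith
  have hWs : W ≤ bstar.xrb - bstar.xlt := by
    apply max_le hws
    have := min_le_left bstar.xrb b.xrb
    have := le_max_left bstar.xlt b.xlt
    linarith
  have hHb : H ≤ b.yrb - b.ylt := by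
    apply max_le hhb
    have := min_le_right bstar.yrb b.yrb
    have := le_max_right bstar.ylt b.ylt
    linarith
  have hHs : H ≤ bstar.yrb - bstar.ylt := by
    apply max_le hhs
    have := min_le_left bstar.yrb b.yrb
    have := le_max_left bstar.ylt b.ylt
    linarith
  have hIs : W * H ≤ bstar.area := by
    unfold Box.area
    exact mul_le_mul hWs hHs hH0 hws
  have hIb2 : 2 * (W * H) ≤ b.area := by
    unfold Box.area
    rcases hc with h | h | h | h
    · -- x centroid right of bstar: W ≤ (b.xrb - b.xlt)/2
      have hc' : W ≤ (b.xrb - b.xlt) / 2 := by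
        apply max_le (by linarith)
        have h1 := min_le_left bstar.xrb b.xrb
        have h2 := le_max_right bstar.xlt b.xlt
        have : bstar.xrb < (b.xlt + b.xrb) / 2 := by
          simpa [Box.xc] using h
        linarith
      nlinarith [mul_le_mul hc' hHb hH0 (by linarith : (0:ℝ) ≤ (b.xrb - b.xlt)/2)]
    · have hc' : W ≤ (b.xrb - b.xlt) / 2 := by
        apply max_le (by linarith)
        have h1 := min_le_right bstar.xrb b.xrb
        have h2 := le_max_left bstar.xlt b.xlt
        have : (b.xlt + b.xrb) / 2 < bstar.xlt := by
          simpa [Box.xc] using h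
        linarith
      nlinarith [mul_le_mul hc' hHb hH0 (by linarith : (0:ℝ) ≤ (b.xrb - b.xlt)/2)]
    · have hc' : H ≤ (b.yrb - b.ylt) / 2 := by
        apply max_le (by linarith)
        have h1 := min_le_left bstar.yrb b.yrb
        have h2 := le_max_right bstar.ylt b.ylt
        have : bstar.yrb < (b.ylt + b.yrb) / 2 := by
          simpa [Box.yc] using h
        linarith
      nlinarith [mul_le_mul hWb hc' hH0 hwb]
    · have hc' : H ≤ (b.yrb - b.ylt) / 2 := by
        apply max_le (by linarith)
        have h1 := min_le_right bstar.yrb b.yrb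
        have h2 := le_max_left bstar.ylt b.ylt
        have : (b.ylt + b.yrb) / 2 < bstar.ylt := by
          simpa [Box.yc] using h
        linarith
      nlinarith [mul_le_mul hWb hc' hH0 hwb]
  have hI0 : 0 ≤ W * H := mul_nonneg hW0 hH0
  have hD : 0 < bstar.area + b.area - W * H := by linarith
  unfold Box.iou
  rw [show Box.inter bstar b = W * H from rfl, div_le_div_iff₀ hD two_pos]
  linarith
end

section
/- Let b* and b be axis-aligned bounding boxes with Area(b*) > 0 and Area(b) > 0, and let N_t ∈ (0,1). Set the scaling factor s = 1/N_t − 1, and let α(b*, s) be the box with corners x_lt' = x_c(b*) − s·(x_c(b*) − x_lt(b*)), x_rb' = x_c(b*) + s·(x_rb(b*) − x_c(b*)), y_lt' = y_c(b*) − s·(y_c(b*) − y_lt(b*)), y_rb' = y_c(b*) + s·(y_rb(b*) − y_c(b*)). If the centroid of b does not lie within α(b*, s), i.e., if x_c(b) > x_rb' or x_c(b) < x_lt' or y_c(b) > y_rb' or y_c(b) < y_lt', then IOU(b, b*) ≤ N_t. -/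
set_option maxHeartbeats 1600000 in
/-- If the centroid of `b` does not lie within the scaled box `α(b*, 1/N_t − 1)`,
then `IOU(b, b*) ≤ N_t`. -/
theorem iou_le_Nt_of_centroid_outside_scaled (bstar b : Box)
    (hstar : 0 < bstar.area) (hb : 0 < b.area)
    (Nt : ℝ) (hNt0 : 0 < Nt) (hNt1 : Nt < 1)
    (hc : b.xc > bstar.xc + (1 / Nt - 1) * (bstar.xrb - bstar.xc) ∨
          b.xc < bstar.xc - (1 / Nt - 1) * (bstar.xc - bstar.xlt) ∨
          b.yc > bstar.yc + (1 / Nt - 1) * (bstar.yrb - bstar.yc) ∨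
          b.yc < bstar.yc - (1 / Nt - 1) * (bstar.yc - bstar.ylt)) :
    Box.iou b bstar ≤ Nt := by
  obtain ⟨s, hs⟩ : ∃ s : ℝ, s = 1 / Nt - 1 := ⟨_, rfl⟩
  rw [← hs] at hc
  have hs0 : 0 < s := by
    have h1 : 1 < 1 / Nt := one_lt_one_div hNt0 hNt1
    rw [hs]; linarith
  have hsNt : Nt * (2 + s) = 1 + Nt := by
    rw [hs]; field_simp; ring
  obtain ⟨ox, hoxd⟩ : ∃ ox : ℝ,
      ox = max 0 (min b.xrb bstar.xrb - max b.xlt bstar.xlt) := ⟨_, rfl⟩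
  obtain ⟨oy, hoyd⟩ : ∃ oy : ℝ,
      oy = max 0 (min b.yrb bstar.yrb - max b.ylt bstar.ylt) := ⟨_, rfl⟩
  have hI : Box.inter b bstar = ox * oy := by rw [Box.inter, hoxd, hoyd]
  have hox0 : 0 ≤ ox := hoxd ▸ le_max_left _ _
  have hoy0 : 0 ≤ oy := hoyd ▸ le_max_left _ _
  have hoxw : ox ≤ b.xrb - b.xlt := by
    rw [hoxd]
    apply max_le (by linarith [b.hx])
    have h1 := min_le_left b.xrb bstar.xrb
    have h2 := le_max_left b.xlt bstar.xlt
    linarith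
  have hoxW : ox ≤ bstar.xrb - bstar.xlt := by
    rw [hoxd]
    apply max_le (by linarith [bstar.hx])
    have h1 := min_le_right b.xrb bstar.xrb
    have h2 := le_max_right b.xlt bstar.xlt
    linarith
  have hoyh : oy ≤ b.yrb - b.ylt := by
    rw [hoyd]
    apply max_le (by linarith [b.hy])
    have h1 := min_le_left b.yrb bstar.yrb
    have h2 := le_max_left b.ylt bstar.ylt
    linarith
  have hoyH : oy ≤ bstar.yrb - bstar.ylt := by
    rw [hoyd]
    apply max_le (by linarith [bstar.hy])
    have h1 := min_le_right b.yrb bstar.yrb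
    have h2 := le_max_right b.ylt bstar.ylt
    linarith
  have hw0 : (0:ℝ) ≤ b.xrb - b.xlt := by linarith [b.hx]
  have hW0 : (0:ℝ) ≤ bstar.xrb - bstar.xlt := by linarith [bstar.hx]
  have hh0 : (0:ℝ) ≤ b.yrb - b.ylt := by linarith [b.hy]
  have hH0 : (0:ℝ) ≤ bstar.yrb - bstar.ylt := by linarith [bstar.hy]
  -- key inequality: inter * (2 + s) ≤ area b + area bstar
  have key : Box.inter b bstar * (2 + s) ≤ b.area + bstar.area := by
    rcases hc with h | h | h | h
    · simp only [Box.xc] at h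
      have h2 : ox * (2 + s) ≤ (b.xrb - b.xlt) + (bstar.xrb - bstar.xlt) := by
        rcases le_or_gt (min b.xrb bstar.xrb - max b.xlt bstar.xlt) 0 with ht | ht
        · have h0 : ox = 0 := by rw [hoxd]; exact max_eq_left ht
          rw [h0]; linarith [hw0, hW0]
        · have hoe : ox = min b.xrb bstar.xrb - max b.xlt bstar.xlt := by
            rw [hoxd]; exact max_eq_right ht.le
          have h1 : ox ≤ bstar.xrb - b.xlt := by
            rw [hoe]
            have hm1 := min_le_right b.xrb bstar.xrb
            have hm2 := le_max_left b.xlt bstar.xlt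
            linarith
          nlinarith [mul_le_mul_of_nonneg_left hoxW hs0.le]
      rw [hI, Box.area, Box.area]
      nlinarith [mul_le_mul_of_nonneg_right h2 hoy0,
        mul_le_mul_of_nonneg_left hoyh hw0, mul_le_mul_of_nonneg_left hoyH hW0]
    · simp only [Box.xc] at h
      have h2 : ox * (2 + s) ≤ (b.xrb - b.xlt) + (bstar.xrb - bstar.xlt) := by
        rcases le_or_gt (min b.xrb bstar.xrb - max b.xlt bstar.xlt) 0 with ht | ht
        · have h0 : ox = 0 := by rw [hoxd]; exact max_eq_left ht
          rw [h0]; linarith [hw0, hW0]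
        · have hoe : ox = min b.xrb bstar.xrb - max b.xlt bstar.xlt := by
            rw [hoxd]; exact max_eq_right ht.le
          have h1 : ox ≤ b.xrb - bstar.xlt := by
            rw [hoe]
            have hm1 := min_le_left b.xrb bstar.xrb
            have hm2 := le_max_right b.xlt bstar.xlt
            linarith
          nlinarith [mul_le_mul_of_nonneg_left hoxW hs0.le]
      rw [hI, Box.area, Box.area]
      nlinarith [mul_le_mul_of_nonneg_right h2 hoy0,
        mul_le_mul_of_nonneg_left hoyh hw0, mul_le_mul_of_nonneg_left hoyH hW0]
    · simp only [Box.yc] at h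
      have h2 : oy * (2 + s) ≤ (b.yrb - b.ylt) + (bstar.yrb - bstar.ylt) := by
        rcases le_or_gt (min b.yrb bstar.yrb - max b.ylt bstar.ylt) 0 with ht | ht
        · have h0 : oy = 0 := by rw [hoyd]; exact max_eq_left ht
          rw [h0]; linarith [hh0, hH0]
        · have hoe : oy = min b.yrb bstar.yrb - max b.ylt bstar.ylt := by
            rw [hoyd]; exact max_eq_right ht.le
          have h1 : oy ≤ bstar.yrb - b.ylt := by
            rw [hoe]
            have hm1 := min_le_right b.yrb bstar.yrb
            have hm2 := le_max_left b.ylt bstar.ylt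
            linarith
          nlinarith [mul_le_mul_of_nonneg_left hoyH hs0.le]
      rw [hI, Box.area, Box.area]
      nlinarith [mul_le_mul_of_nonneg_right h2 hox0,
        mul_le_mul_of_nonneg_left hoxw hh0, mul_le_mul_of_nonneg_left hoxW hH0]
    · simp only [Box.yc] at h
      have h2 : oy * (2 + s) ≤ (b.yrb - b.ylt) + (bstar.yrb - bstar.ylt) := by
        rcases le_or_gt (min b.yrb bstar.yrb - max b.ylt bstar.ylt) 0 with ht | ht
        · have h0 : oy = 0 := by rw [hoyd]; exact max_eq_left ht
          rw [h0]; linarith [hh0, hH0]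
        · have hoe : oy = min b.yrb bstar.yrb - max b.ylt bstar.ylt := by
            rw [hoyd]; exact max_eq_right ht.le
          have h1 : oy ≤ b.yrb - bstar.ylt := by
            rw [hoe]
            have hm1 := min_le_left b.yrb bstar.yrb
            have hm2 := le_max_right b.ylt bstar.ylt
            linarith
          nlinarith [mul_le_mul_of_nonneg_left hoyH hs0.le]
      rw [hI, Box.area, Box.area]
      nlinarith [mul_le_mul_of_nonneg_right h2 hox0,
        mul_le_mul_of_nonneg_left hoxw hh0, mul_le_mul_of_nonneg_left hoxW hH0]
  have hIA : Box.inter b bstar ≤ bstar.area := by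
    rw [hI, Box.area]
    nlinarith [mul_le_mul_of_nonneg_left hoyH hW0, mul_le_mul_of_nonneg_right hoxW hoy0]
  have hden : 0 < b.area + bstar.area - Box.inter b bstar := by linarith
  rw [Box.iou, div_le_iff₀ hden]
  have h4 : Box.inter b bstar * (1 + Nt) ≤ Nt * (b.area + bstar.area) := by
    calc Box.inter b bstar * (1 + Nt)
        = Nt * (Box.inter b bstar * (2 + s)) := by
          rw [show Nt * (Box.inter b bstar * (2 + s))
              = Box.inter b bstar * (Nt * (2 + s)) by ring, hsNt]
      _ ≤ Nt * (b.area + bstar.area) := mul_le_mul_of_nonneg_left key hNt0.le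
  nlinarith [h4]
end

section
/- Let b* and b be axis-aligned bounding boxes. If the centroid of b lies strictly outside b*, i.e., if x_c(b) > x_rb(b*) or x_c(b) < x_lt(b*) or y_c(b) > y_rb(b*) or y_c(b) < y_lt(b*), then the area of the intersection satisfies Inter(b*, b) ≤ (1/2)·Area(b). -/
lemma key_aux (a b c d : ℝ) (hc : 0 ≤ c) (hd : 0 ≤ d) (ha : a ≤ c) (hb : b ≤ d) :
    max 0 a * max 0 b ≤ c * d :=
  mul_le_mul (max_le hc ha) (max_le hd hb) (le_max_left 0 b) hc

/-- If the centroid of `b` lies strictly outside `b*`, then `Inter(b*, b) ≤ (1/2)·Area(b)`. -/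
theorem inter_le_half_area_of_centroid_outside (bstar b : Box)
    (hc : b.xc > bstar.xrb ∨ b.xc < bstar.xlt ∨ b.yc > bstar.yrb ∨ b.yc < bstar.ylt) :
    Box.inter bstar b ≤ (1 / 2) * b.area := by
  unfold Box.inter Box.area
  have hx := b.hx; have hy := b.hy
  have hxm : min bstar.xrb b.xrb ≤ bstar.xrb := min_le_left _ _
  have hxm' : min bstar.xrb b.xrb ≤ b.xrb := min_le_right _ _
  have hxM : b.xlt ≤ max bstar.xlt b.xlt := le_max_right _ _
  have hxM' : bstar.xlt ≤ max bstar.xlt b.xlt := le_max_left _ _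
  have hym : min bstar.yrb b.yrb ≤ bstar.yrb := min_le_left _ _
  have hym' : min bstar.yrb b.yrb ≤ b.yrb := min_le_right _ _
  have hyM : b.ylt ≤ max bstar.ylt b.ylt := le_max_right _ _
  have hyM' : bstar.ylt ≤ max bstar.ylt b.ylt := le_max_left _ _
  rcases hc with h | h | h | h
  · have := key_aux (min bstar.xrb b.xrb - max bstar.xlt b.xlt)
      (min bstar.yrb b.yrb - max bstar.ylt b.ylt)
      ((b.xrb - b.xlt) / 2) (b.yrb - b.ylt)
      (by linarith) (by linarith)
      (by unfold Box.xc at h; linarith) (by linarith)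
    linarith
  · have := key_aux (min bstar.xrb b.xrb - max bstar.xlt b.xlt)
      (min bstar.yrb b.yrb - max bstar.ylt b.ylt)
      ((b.xrb - b.xlt) / 2) (b.yrb - b.ylt)
      (by linarith) (by linarith)
      (by unfold Box.xc at h; linarith) (by linarith)
    linarith
  · have := key_aux (min bstar.xrb b.xrb - max bstar.xlt b.xlt)
      (min bstar.yrb b.yrb - max bstar.ylt b.ylt)
      (b.xrb - b.xlt) ((b.yrb - b.ylt) / 2)
      (by linarith) (by linarith)
      (by linarith) (by unfold Box.yc at h; linarith)
    linarith
  · have := key_aux (min bstar.xrb b.xrb - max bstar.xlt b.xlt)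
      (min bstar.yrb b.yrb - max bstar.ylt b.ylt)
      (b.xrb - b.xlt) ((b.yrb - b.ylt) / 2)
      (by linarith) (by linarith)
      (by linarith) (by unfold Box.yc at h; linarith)
    linarith
end

section
/- Let b* and b be axis-aligned bounding boxes with positive widths and heights, and let N_t ∈ (0,1). Set s = 1/N_t − 1 and let α(b*, s) be the box with corners x_lt' = x_c(b*) − s·(x_c(b*) − x_lt(b*)), x_rb' = x_c(b*) + s·(x_rb(b*) − x_c(b*)), y_lt' = y_c(b*) − s·(y_c(b*) − y_lt(b*)), y_rb' = y_c(b*) + s·(y_rb(b*) − y_c(b*)). Let I_x = min(x_rb(b*), x_rb(b)) − max(x_lt(b*), x_lt(b)) and I_y = min(y_rb(b*), y_rb(b)) − max(y_lt(b*), y_lt(b)), and suppose I_x > 0 and I_y > 0. If the centroid of b does not lie within α(b*, s) (i.e., x_c(b) > x_rb' or x_c(b) < x_lt' or y_c(b) > y_rb' or y_c(b) < y_lt'), then (Area(b*) + Area(b)) / (I_x·I_y) ≥ 1/N_t + 1. -/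
/-- If the centroid of `b` does not lie within the scaled box `α(b*, 1/N_t − 1)` and the
overlaps `I_x, I_y` are positive, then `(Area(b*) + Area(b)) / (I_x·I_y) ≥ 1/N_t + 1`. -/
theorem area_sum_div_inter_ge (bstar b : Box)
    (hwstar : bstar.xlt < bstar.xrb) (hhstar : bstar.ylt < bstar.yrb)
    (hwb : b.xlt < b.xrb) (hhb : b.ylt < b.yrb)
    (Nt : ℝ) (hNt0 : 0 < Nt) (hNt1 : Nt < 1)
    (hIx : 0 < min bstar.xrb b.xrb - max bstar.xlt b.xlt)
    (hIy : 0 < min bstar.yrb b.yrb - max bstar.ylt b.ylt)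
    (hc : b.xc > bstar.xc + (1 / Nt - 1) * (bstar.xrb - bstar.xc) ∨
          b.xc < bstar.xc - (1 / Nt - 1) * (bstar.xc - bstar.xlt) ∨
          b.yc > bstar.yc + (1 / Nt - 1) * (bstar.yrb - bstar.yc) ∨
          b.yc < bstar.yc - (1 / Nt - 1) * (bstar.yc - bstar.ylt)) :
    (bstar.area + b.area) /
        ((min bstar.xrb b.xrb - max bstar.xlt b.xlt) *
          (min bstar.yrb b.yrb - max bstar.ylt b.ylt)) ≥ 1 / Nt + 1 := by
  set s : ℝ := 1 / Nt - 1 with hs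
  have h1Nt : 1 < 1 / Nt := (one_lt_div hNt0).2 hNt1
  have hs0 : 0 < s := by rw [hs]; linarith
  set Ix := min bstar.xrb b.xrb - max bstar.xlt b.xlt with hIxdef
  set Iy := min bstar.yrb b.yrb - max bstar.ylt b.ylt with hIydef
  clear_value s Ix Iy
  have hIxW : Ix ≤ bstar.xrb - bstar.xlt := by
    rw [hIxdef]
    have h1 : min bstar.xrb b.xrb ≤ bstar.xrb := min_le_left _ _
    have h2 : bstar.xlt ≤ max bstar.xlt b.xlt := le_max_left _ _
    linarith
  have hIxw : Ix ≤ b.xrb - b.xlt := by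
    rw [hIxdef]
    have h1 : min bstar.xrb b.xrb ≤ b.xrb := min_le_right _ _
    have h2 : b.xlt ≤ max bstar.xlt b.xlt := le_max_right _ _
    linarith
  have hIyH : Iy ≤ bstar.yrb - bstar.ylt := by
    rw [hIydef]
    have h1 : min bstar.yrb b.yrb ≤ bstar.yrb := min_le_left _ _
    have h2 : bstar.ylt ≤ max bstar.ylt b.ylt := le_max_left _ _
    linarith
  have hIyh : Iy ≤ b.yrb - b.ylt := by
    rw [hIydef]
    have h1 : min bstar.yrb b.yrb ≤ b.yrb := min_le_right _ _
    have h2 : b.ylt ≤ max bstar.ylt b.ylt := le_max_right _ _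
    linarith
  -- key linear bound from the centroid condition
  have key : (s + 2) * Ix ≤ (bstar.xrb - bstar.xlt) + (b.xrb - b.xlt) ∨
             (s + 2) * Iy ≤ (bstar.yrb - bstar.ylt) + (b.yrb - b.ylt) := by
    rcases hc with h | h | h | h
    · left
      have hIx2 : Ix ≤ bstar.xrb - b.xlt := by
        rw [hIxdef]
        have h1 : min bstar.xrb b.xrb ≤ bstar.xrb := min_le_left _ _
        have h2 : b.xlt ≤ max bstar.xlt b.xlt := le_max_right _ _
        linarith
      have hsIx : s * Ix ≤ s * (bstar.xrb - bstar.xlt) :=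
        mul_le_mul_of_nonneg_left hIxW hs0.le
      simp only [Box.xc] at h
      have e : s * (bstar.xrb - (bstar.xlt + bstar.xrb) / 2)
          = s * (bstar.xrb - bstar.xlt) / 2 := by ring
      have hexp : (s + 2) * Ix = s * Ix + 2 * Ix := by ring
      linarith [h, e]
    · left
      have hIx2 : Ix ≤ b.xrb - bstar.xlt := by
        rw [hIxdef]
        have h1 : min bstar.xrb b.xrb ≤ b.xrb := min_le_right _ _
        have h2 : bstar.xlt ≤ max bstar.xlt b.xlt := le_max_left _ _
        linarith
      have hsIx : s * Ix ≤ s * (bstar.xrb - bstar.xlt) :=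
        mul_le_mul_of_nonneg_left hIxW hs0.le
      simp only [Box.xc] at h
      have e : s * ((bstar.xlt + bstar.xrb) / 2 - bstar.xlt)
          = s * (bstar.xrb - bstar.xlt) / 2 := by ring
      have hexp : (s + 2) * Ix = s * Ix + 2 * Ix := by ring
      linarith [h, e]
    · right
      have hIy2 : Iy ≤ bstar.yrb - b.ylt := by
        rw [hIydef]
        have h1 : min bstar.yrb b.yrb ≤ bstar.yrb := min_le_left _ _
        have h2 : b.ylt ≤ max bstar.ylt b.ylt := le_max_right _ _
        linarith
      have hsIy : s * Iy ≤ s * (bstar.yrb - bstar.ylt) :=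
        mul_le_mul_of_nonneg_left hIyH hs0.le
      simp only [Box.yc] at h
      have e : s * (bstar.yrb - (bstar.ylt + bstar.yrb) / 2)
          = s * (bstar.yrb - bstar.ylt) / 2 := by ring
      have hexp : (s + 2) * Iy = s * Iy + 2 * Iy := by ring
      linarith [h, e]
    · right
      have hIy2 : Iy ≤ b.yrb - bstar.ylt := by
        rw [hIydef]
        have h1 : min bstar.yrb b.yrb ≤ b.yrb := min_le_right _ _
        have h2 : bstar.ylt ≤ max bstar.ylt b.ylt := le_max_left _ _
        linarith
      have hsIy : s * Iy ≤ s * (bstar.yrb - bstar.ylt) :=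
        mul_le_mul_of_nonneg_left hIyH hs0.le
      simp only [Box.yc] at h
      have e : s * ((bstar.ylt + bstar.yrb) / 2 - bstar.ylt)
          = s * (bstar.yrb - bstar.ylt) / 2 := by ring
      have hexp : (s + 2) * Iy = s * Iy + 2 * Iy := by ring
      linarith [h, e]
  have hprod : 0 < Ix * Iy := mul_pos hIx hIy
  have hgoal : (s + 2) * (Ix * Iy) ≤ bstar.area + b.area := by
    simp only [Box.area]
    rcases key with hk | hk
    · nlinarith [mul_le_mul_of_nonneg_left hk hIy.le,
        mul_le_mul_of_nonneg_left hIyH (sub_nonneg.2 hwstar.le),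
        mul_le_mul_of_nonneg_left hIyh (sub_nonneg.2 hwb.le)]
    · nlinarith [mul_le_mul_of_nonneg_left hk hIx.le,
        mul_le_mul_of_nonneg_left hIxW (sub_nonneg.2 hhstar.le),
        mul_le_mul_of_nonneg_left hIxw (sub_nonneg.2 hhb.le)]
  rw [ge_iff_le, le_div_iff₀ hprod]
  have hNe : 1 / Nt + 1 = s + 2 := by rw [hs]; ring
  rw [hNe]
  linarith [hgoal]
end

section
/- Let b_1,…,b_n be axis-aligned bounding boxes with confidence scores s_1,…,s_n ∈ ℝ, N_t ∈ ℝ, and E(v,u) ⇔ s_v > s_u and IOU(b_v,b_u) > N_t. Let k : {1,…,n} → {0,1} be the unique function satisfying k(u) = 1 ⇔ (∀v, E(v,u) → k(v) = 0) (the output of original NMS), and define the Fast NMS output k_F : {1,…,n} → {0,1} by k_F(u) = 1 ⇔ there is no v with E(v,u). Then for every u, k_F(u) = 1 implies k(u) = 1; equivalently, the set of boxes retained by Fast NMS is a subset of the set of boxes retained by original NMS, i.e., Fast NMS suppresses at least as many boxes as original NMS. -/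
/-- Every box retained by Fast NMS is also retained by original NMS. -/
theorem fast_nms_retained_subset (n : ℕ) (b : Fin n → Box) (s : Fin n → ℝ) (Nt : ℝ)
    (E : Fin n → Fin n → Prop)
    (hE : ∀ v u, E v u ↔ s v > s u ∧ Box.iou (b v) (b u) > Nt)
    (k : Fin n → Fin 2)
    (hk : ∀ u, k u = 1 ↔ ∀ v, E v u → k v = 0)
    (kF : Fin n → Fin 2)
    (hkF : ∀ u, kF u = 1 ↔ ¬ ∃ v, E v u) :
    ∀ u, kF u = 1 → k u = 1 := by
  intro u h
  rw [hkF] at h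
  rw [hk]
  intro v hv
  exact absurd ⟨v, hv⟩ h
end
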